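/- Let d ≥ 2 and G > 1 + γ. Let the margin-based loss φ : ℝ → [0,∞) be bounded, continuous, non-increasing and quasi-concave even, and assume φ(−G) > φ(G). Then φ is H_relu-calibrated with respect to the adversarial 0/1 loss ℓ_γ if and only if for every t ∈ [0,1]: φ(G) + φ(−G) = φ(t+G) + φ(−t−G), and φ(γ) + φ(−γ) > φ(G) + φ(−G). -/

import Mathlib

open scoped RealInnerProductSpace

noncomputable section

/-- A loss assigns a value to a predictor `f`, a point `x`, and a label `y` (±1). -/
abbrev Loss (d : ℕ) := ((EuclideanSpace ℝ (Fin d)) → ℝ) → (EuclideanSpace ℝ (Fin d)) → ℝ → ℝ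

variable {d : ℕ}

/-- The inner (conditional) ℓ-risk. -/
def innerRisk (ℓ : Loss d) (f : EuclideanSpace ℝ (Fin d) → ℝ)
    (x : EuclideanSpace ℝ (Fin d)) (η : ℝ) : ℝ :=
  η * ℓ f x 1 + (1 - η) * ℓ f x (-1)

/-- The minimal inner ℓ-risk over a hypothesis set `H`. -/
def minInnerRisk (ℓ : Loss d) (H : Set (EuclideanSpace ℝ (Fin d) → ℝ))
    (x : EuclideanSpace ℝ (Fin d)) (η : ℝ) : ℝ :=
  ⨅ f : H, innerRisk ℓ f x η

/-- ℓ₁ is H-calibrated with respect to ℓ₂. -/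
def Calibrated (H : Set (EuclideanSpace ℝ (Fin d) → ℝ)) (ℓ₁ ℓ₂ : Loss d) : Prop :=
  ∀ ε > (0:ℝ), ∀ η ∈ Set.Icc (0:ℝ) 1, ∀ x : EuclideanSpace ℝ (Fin d), ‖x‖ ≤ 1 →
    ∃ δ > (0:ℝ), ∀ f ∈ H,
      innerRisk ℓ₁ f x η < minInnerRisk ℓ₁ H x η + δ →
      innerRisk ℓ₂ f x η < minInnerRisk ℓ₂ H x η + ε

/-- The adversarial 0/1 loss with perturbation radius γ. -/
def advLoss (γ : ℝ) : Loss d := fun f x y =>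
  ⨆ x' : Metric.closedBall x γ, (if y * f ↑x' ≤ 0 then (1:ℝ) else 0)

/-- A margin-based loss viewed as a loss. -/
def marginLoss (φ : ℝ → ℝ) : Loss d := fun f x y => φ (y * f x)

/-- The supremum-based surrogate of a margin-based loss. -/
def supLoss (γ : ℝ) (φ : ℝ → ℝ) : Loss d := fun f x y =>
  ⨆ x' : Metric.closedBall x γ, φ (y * f ↑x')

/-- Infimum of f over the closed γ-ball around x. -/
def infBall (γ : ℝ) (f : EuclideanSpace ℝ (Fin d) → ℝ) (x : EuclideanSpace ℝ (Fin d)) : ℝ :=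
  ⨅ x' : Metric.closedBall x γ, f ↑x'

/-- Supremum of f over the closed γ-ball around x. -/
def supBall (γ : ℝ) (f : EuclideanSpace ℝ (Fin d) → ℝ) (x : EuclideanSpace ℝ (Fin d)) : ℝ :=
  ⨆ x' : Metric.closedBall x γ, f ↑x'

/-- x is a distinguishing point for H. -/
def Distinguishing (γ : ℝ) (H : Set (EuclideanSpace ℝ (Fin d) → ℝ))
    (x : EuclideanSpace ℝ (Fin d)) : Prop :=
  ‖x‖ ≤ 1 ∧ (∃ f ∈ H, 0 < infBall γ f x) ∧ (∃ g ∈ H, supBall γ g x < 0)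

/-- H is regular for adversarial calibration. -/
def RegularAdv (γ : ℝ) (H : Set (EuclideanSpace ℝ (Fin d) → ℝ)) : Prop :=
  ∃ x, Distinguishing γ H x

/-- H is symmetric. -/
def SymmetricH (H : Set (EuclideanSpace ℝ (Fin d) → ℝ)) : Prop :=
  ∀ f ∈ H, -f ∈ H

/-- Linear hypothesis set. -/
def Hlin (d : ℕ) : Set (EuclideanSpace ℝ (Fin d) → ℝ) :=
  { f | ∃ w : EuclideanSpace ℝ (Fin d), ‖w‖ = 1 ∧ f = fun x => (inner ℝ w x : ℝ) }

/-- Generalized linear hypothesis set. -/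
def Hg (d : ℕ) (g : ℝ → ℝ) (G : ℝ) : Set (EuclideanSpace ℝ (Fin d) → ℝ) :=
  { f | ∃ (w : EuclideanSpace ℝ (Fin d)) (b : ℝ), ‖w‖ = 1 ∧ |b| ≤ G ∧
      f = fun x => g (inner ℝ w x : ℝ) + b }

/-- ReLU-based hypothesis set. -/
def Hrelu (d : ℕ) (G : ℝ) : Set (EuclideanSpace ℝ (Fin d) → ℝ) :=
  Hg d (fun t => max t 0) G

/-- One-layer ReLU neural network hypothesis set. -/
def Hnn (d n : ℕ) (Λ W : ℝ) : Set (EuclideanSpace ℝ (Fin d) → ℝ) :=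
  { f | ∃ (u : Fin n → ℝ) (w : Fin n → EuclideanSpace ℝ (Fin d)),
      (∑ j, |u j|) ≤ Λ ∧ (∀ j, ‖w j‖ ≤ W) ∧
      f = fun x => ∑ j, u j * max (inner ℝ (w j) x : ℝ) 0 }

/-- All (Borel) measurable functions. -/
def Hall (d : ℕ) : Set (EuclideanSpace ℝ (Fin d) → ℝ) :=
  { f | Measurable f }

/-- The ρ-margin loss. -/
def phiRho (ρ t : ℝ) : ℝ := min 1 (max 0 (1 - t / ρ))



/-!
Write `ψ t = φ t + φ (-t)`; quasi-concavity of the even function `ψ` means that `ψ` decreases in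
`|t|`. At a point `x` the surrogate risk of `f ∈ H_relu` depends only on `s = f x`, which ranges
over `[-G, ‖x‖ + G]`, both ends being attained. Every `f ∈ H_relu` is 1-Lipschitz, so its
adversarial risk is `1 - η` when `f x > γ` and `η` when `f x < -γ`, and the optimal adversarial
risk is `min η (1 - η)`.

If `ψ` is constant on `[G, G + 1]` and `ψ γ > ψ G`, the surrogate risk exceeds its infimum by a
definite amount at every `s` with `|s| ≤ γ`, and at every `s` of the sign disfavoured by `η` unless
`η` is close to `1/2`; so near-minimisers are adversarially near-optimal. Conversely, a drop of `ψ`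
on `[G, G + 1]` or a flat `ψ` on `[γ, G]` produces near-minimisers of the surrogate risk whose
adversarial risk is far from optimal.
-/

open Set Metric Filter Topology

section MarginRisk

variable {φ : ℝ → ℝ} {η s a : ℝ}

def marginRisk (φ : ℝ → ℝ) (η s : ℝ) : ℝ := η * φ s + (1 - η) * φ (-s)

lemma innerRisk_marginLoss (f : EuclideanSpace ℝ (Fin d) → ℝ) (x : EuclideanSpace ℝ (Fin d)) :
    innerRisk (marginLoss φ) f x η = marginRisk φ η (f x) := by
  simp [innerRisk, marginLoss, marginRisk]

lemma marginRisk_one_sub_neg : marginRisk φ (1 - η) (-s) = marginRisk φ η s := by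
  unfold marginRisk; rw [neg_neg]; ring

lemma add_neg_le_add_neg_of_abs_le (hq : QuasiconcaveOn ℝ univ fun t => φ t + φ (-t))
    (h : |s| ≤ a) : φ a + φ (-a) ≤ φ s + φ (-s) := by
  have hseg := (hq (φ a + φ (-a))).segment_subset (x := -a) (y := a)
    ⟨trivial, by simp [add_comm]⟩ ⟨trivial, le_rfl⟩
  rw [segment_eq_Icc (by linarith [neg_abs_le s, le_abs_self s])] at hseg
  exact (hseg (abs_le.1 h)).2

lemma marginRisk_neg_le_of_le_half (hanti : Antitone φ) (hη0 : 0 ≤ η) (hη : η ≤ 1 / 2)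
    (hs : -a ≤ s) (hψ : φ a + φ (-a) ≤ φ s + φ (-s)) :
    marginRisk φ η (-a) ≤ marginRisk φ η s := by
  have hexcess : marginRisk φ η s - marginRisk φ η (-a)
      = (1 - 2 * η) * (φ (-s) - φ a) + η * ((φ s + φ (-s)) - (φ a + φ (-a))) := by
    unfold marginRisk; rw [neg_neg]; ring
  have h₁ : 0 ≤ (1 - 2 * η) * (φ (-s) - φ a) :=
    mul_nonneg (by linarith) (sub_nonneg.2 (hanti (by linarith)))
  have h₂ : 0 ≤ η * ((φ s + φ (-s)) - (φ a + φ (-a))) := mul_nonneg hη0 (sub_nonneg.2 hψ)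
  linarith

lemma marginRisk_near_min_of_half_le (hanti : Antitone φ)
    (hq : QuasiconcaveOn ℝ univ fun t => φ t + φ (-t)) {γ ε : ℝ} (hγ : 0 ≤ γ) (ha : 0 ≤ a)
    (hψa : φ a + φ (-a) < φ γ + φ (-γ)) (hη : 1 / 2 ≤ η) (hη1 : η ≤ 1) (hε : 0 < ε) :
    ∃ δ > 0, ∀ s ≤ a, φ a + φ (-a) ≤ φ s + φ (-s) →
      marginRisk φ η s < marginRisk φ η a + δ →
        (γ < s ∧ 1 - 2 * η < ε) ∨ (s < -γ ∧ 2 * η - 1 < ε) := by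
  have hγa : γ < a := by
    by_contra! h
    exact hψa.not_ge (add_neg_le_add_neg_of_abs_le hq (abs_le.2 ⟨by linarith, h⟩))
  set A := φ γ - φ a
  set B := (φ γ + φ (-γ)) - (φ a + φ (-a))
  have hB : 0 < B := sub_pos.2 hψa
  have hA : 0 < A := hB.trans_le (by linarith [hanti (neg_le_neg hγa.le)])
  refine ⟨min (min A (B / 2)) (ε * A), lt_min (lt_min hA (half_pos hB)) (mul_pos hε hA),
    fun s hsa hψs hlt => ?_⟩
  by_contra! hs
  have hsγ : s ≤ γ := by
    by_contra! h
    linarith [hs.1 h]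
  have hφs : A ≤ φ s - φ a := by linarith [hanti hsγ]
  have hexcess : marginRisk φ η s - marginRisk φ η a
      = (2 * η - 1) * (φ s - φ a) + (1 - η) * ((φ s + φ (-s)) - (φ a + φ (-a))) := by
    unfold marginRisk; ring
  have hψ₀ : 0 ≤ (1 - η) * ((φ s + φ (-s)) - (φ a + φ (-a))) :=
    mul_nonneg (by linarith) (sub_nonneg.2 hψs)
  rcases lt_or_ge s (-γ) with hs' | hs'
  · have : ε * A ≤ (2 * η - 1) * (φ s - φ a) :=
      mul_le_mul (hs.2 hs') hφs (by linarith) (by linarith)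
    linarith [min_le_right (min A (B / 2)) (ε * A)]
  · have hψB : B ≤ (φ s + φ (-s)) - (φ a + φ (-a)) := by
      linarith [add_neg_le_add_neg_of_abs_le hq (abs_le.2 ⟨hs', hsγ⟩)]
    -- `min A (B/2)` is at most the convex combination `(2η - 1) A + 2(1 - η) (B/2)`
    have h₁ : (2 * η - 1) * min A (B / 2) ≤ (2 * η - 1) * (φ s - φ a) :=
      mul_le_mul_of_nonneg_left ((min_le_left _ _).trans hφs) (by linarith)
    have h₂ : (1 - η) * (2 * min A (B / 2)) ≤ (1 - η) * ((φ s + φ (-s)) - (φ a + φ (-a))) :=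
      mul_le_mul_of_nonneg_left (by linarith [min_le_right A (B / 2)]) (by linarith)
    linarith [min_le_left (min A (B / 2)) (ε * A)]

lemma marginRisk_near_min (hanti : Antitone φ) (hq : QuasiconcaveOn ℝ univ fun t => φ t + φ (-t))
    {γ ε c : ℝ} (hγ : 0 ≤ γ) (ha : 0 ≤ a) (hac : a ≤ c) (hψc : φ c + φ (-c) = φ a + φ (-a))
    (hψa : φ a + φ (-a) < φ γ + φ (-γ)) (hη : η ∈ Icc (0 : ℝ) 1) (hε : 0 < ε) :
    ∃ δ > 0, ∀ s ∈ Icc (-a) c,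
      marginRisk φ η s < min (marginRisk φ η c) (marginRisk φ η (-a)) + δ →
        (γ < s ∧ 1 - 2 * η < ε) ∨ (s < -γ ∧ 2 * η - 1 < ε) := by
  have hψs : ∀ s ∈ Icc (-a) c, φ c + φ (-c) ≤ φ s + φ (-s) := fun s hs =>
    add_neg_le_add_neg_of_abs_le hq (abs_le.2 ⟨by linarith [hs.1], hs.2⟩)
  rcases le_total (1 / 2) η with hη2 | hη2
  · obtain ⟨δ, hδ, hnear⟩ := marginRisk_near_min_of_half_le hanti hq hγ (ha.trans hac)
      (hψc ▸ hψa) hη2 hη.2 hε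
    exact ⟨δ, hδ, fun s hs hlt =>
      hnear s hs.2 (hψs s hs) (hlt.trans_le (by gcongr; exact min_le_left _ _))⟩
  · -- the case `η ≤ 1/2` is the case `1 - η ≥ 1/2` for `-s`
    obtain ⟨δ, hδ, hnear⟩ := marginRisk_near_min_of_half_le (η := 1 - η) hanti hq hγ ha hψa
      (by linarith) (by linarith [hη.1]) hε
    refine ⟨δ, hδ, fun s hs hlt => ?_⟩
    have hψ' : φ a + φ (-a) ≤ φ (-s) + φ (-(-s)) := by
      rw [neg_neg, add_comm (φ (-s)), ← hψc]; exact hψs s hs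
    have hlt' : marginRisk φ (1 - η) (-s) < marginRisk φ (1 - η) a + δ := by
      have e : marginRisk φ (1 - η) a = marginRisk φ η (-a) := by
        simpa using marginRisk_one_sub_neg (φ := φ) (η := η) (s := -a)
      rw [marginRisk_one_sub_neg, e]
      exact hlt.trans_le (by gcongr; exact min_le_right _ _)
    rcases hnear (-s) (by linarith [hs.1]) hψ' hlt' with ⟨h₁, h₂⟩ | ⟨h₁, h₂⟩
    · exact Or.inr ⟨by linarith, by linarith⟩
    · exact Or.inl ⟨by linarith, by linarith⟩

lemma exists_marginRisk_lt_of_lt {c : ℝ} (h : φ c + φ (-c) < φ a + φ (-a)) :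
    ∃ η, 0 ≤ η ∧ η < 1 / 2 ∧ marginRisk φ η c < marginRisk φ η (-a) := by
  have hcont : Continuous fun η => marginRisk φ η (-a) - marginRisk φ η c := by
    unfold marginRisk; fun_prop
  have hhalf : 0 < marginRisk φ (1 / 2) (-a) - marginRisk φ (1 / 2) c := by
    unfold marginRisk; rw [neg_neg]; linarith
  have hgap : ∀ᶠ η in 𝓝[<] (1 / 2 : ℝ), 0 < marginRisk φ η (-a) - marginRisk φ η c :=
    nhdsWithin_le_nhds (hcont.continuousAt.eventually (lt_mem_nhds hhalf))
  have hIoo : ∀ᶠ η in 𝓝[<] (1 / 2 : ℝ), η ∈ Ioo 0 (1 / 2) := Ioo_mem_nhdsLT (by norm_num)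
  obtain ⟨η, hη, hηI⟩ := (hgap.and hIoo).exists
  exact ⟨η, hηI.1.le, hηI.2, sub_pos.1 hη⟩

end MarginRisk

section AdvLoss

variable {γ η : ℝ} {f : EuclideanSpace ℝ (Fin d) → ℝ} {x : EuclideanSpace ℝ (Fin d)}

lemma advLoss_nonneg (y : ℝ) : 0 ≤ advLoss γ f x y :=
  Real.iSup_nonneg fun _ => by split <;> norm_num

lemma advLoss_eq_one {y : ℝ} (h : ∃ z ∈ closedBall x γ, y * f z ≤ 0) : advLoss γ f x y = 1 := by
  obtain ⟨z, hz, hfz⟩ := h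
  have : Nonempty (closedBall x γ) := ⟨⟨z, hz⟩⟩
  unfold advLoss
  refine le_antisymm (ciSup_le fun _ => by split <;> norm_num) ?_
  refine le_ciSup_of_le ⟨1, ?_⟩ ⟨z, hz⟩ (by simp [hfz])
  rintro _ ⟨_, rfl⟩
  dsimp only
  split <;> norm_num

lemma advLoss_eq_zero (hγ : 0 ≤ γ) {y : ℝ} (h : ∀ z ∈ closedBall x γ, 0 < y * f z) :
    advLoss γ f x y = 0 := by
  have : Nonempty (closedBall x γ) := ⟨⟨x, mem_closedBall_self hγ⟩⟩
  have hzero : (fun z : closedBall x γ => if y * f z ≤ 0 then (1 : ℝ) else 0) = fun _ => 0 :=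
    funext fun z => if_neg (h z z.2).not_ge
  simp only [advLoss, hzero, ciSup_const]

lemma pos_of_mem_closedBall (hf : LipschitzWith 1 f) (h : γ < f x) {z} (hz : z ∈ closedBall x γ) :
    0 < f z := by
  have := hf.mapsTo_closedBall x γ hz
  rw [Real.closedBall_eq_Icc, NNReal.coe_one, one_mul] at this
  linarith [this.1]

lemma neg_of_mem_closedBall (hf : LipschitzWith 1 f) (h : f x < -γ) {z} (hz : z ∈ closedBall x γ) :
    f z < 0 := by
  have := hf.mapsTo_closedBall x γ hz
  rw [Real.closedBall_eq_Icc, NNReal.coe_one, one_mul] at this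
  linarith [this.2]

lemma innerRisk_advLoss_of_lt (hf : LipschitzWith 1 f) (h : γ < f x) (hγ : 0 ≤ γ) :
    innerRisk (advLoss γ) f x η = 1 - η := by
  rw [innerRisk, advLoss_eq_zero hγ (by simpa using fun z => pos_of_mem_closedBall hf h),
    advLoss_eq_one ⟨x, mem_closedBall_self hγ, by linarith⟩]
  ring

lemma innerRisk_advLoss_of_lt_neg (hf : LipschitzWith 1 f) (h : f x < -γ) (hγ : 0 ≤ γ) :
    innerRisk (advLoss γ) f x η = η := by
  rw [innerRisk, advLoss_eq_one ⟨x, mem_closedBall_self hγ, by linarith⟩,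
    advLoss_eq_zero hγ (by simpa using fun z => neg_of_mem_closedBall hf h)]
  ring

lemma one_sub_le_innerRisk_advLoss (hγ : 0 ≤ γ) (hη : η ∈ Icc (0 : ℝ) 1) (hfx : 0 ≤ f x) :
    1 - η ≤ innerRisk (advLoss γ) f x η := by
  rw [innerRisk, advLoss_eq_one (y := -1) ⟨x, mem_closedBall_self hγ, by linarith⟩]
  nlinarith [advLoss_nonneg (γ := γ) (f := f) (x := x) 1, hη.1]

lemma min_le_innerRisk_advLoss (hγ : 0 ≤ γ) (hη : η ∈ Icc (0 : ℝ) 1) :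
    min η (1 - η) ≤ innerRisk (advLoss γ) f x η := by
  rcases le_total (f x) 0 with hfx | hfx
  · rw [innerRisk, advLoss_eq_one ⟨x, mem_closedBall_self hγ, by linarith⟩]
    nlinarith [advLoss_nonneg (γ := γ) (f := f) (x := x) (-1), hη.2, min_le_left η (1 - η)]
  · exact (min_le_right _ _).trans (one_sub_le_innerRisk_advLoss hγ hη hfx)

lemma innerRisk_advLoss_eq_one (h₁ : ∃ z ∈ closedBall x γ, f z ≤ 0)
    (h₂ : ∃ z ∈ closedBall x γ, 0 ≤ f z) : innerRisk (advLoss γ) f x η = 1 := by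
  rw [innerRisk, advLoss_eq_one (by simpa using h₁), advLoss_eq_one (by simpa using h₂)]
  ring

lemma innerRisk_advLoss_lt_min_add (hf : LipschitzWith 1 f) (hγ : 0 ≤ γ) {ε : ℝ} (hε₀ : 0 < ε)
    (h : (γ < f x ∧ 1 - 2 * η < ε) ∨ (f x < -γ ∧ 2 * η - 1 < ε)) :
    innerRisk (advLoss γ) f x η < min η (1 - η) + ε := by
  rcases h with ⟨hfx, hε⟩ | ⟨hfx, hε⟩
  · rw [innerRisk_advLoss_of_lt hf hfx hγ]
    linarith [lt_min (by linarith : 1 - η - ε < η) (by linarith : 1 - η - ε < 1 - η)]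
  · rw [innerRisk_advLoss_of_lt_neg hf hfx hγ]
    linarith [lt_min (by linarith : η - ε < η) (by linarith : η - ε < 1 - η)]

end AdvLoss

section MinInnerRisk

variable {ℓ : Loss d} {H : Set (EuclideanSpace ℝ (Fin d) → ℝ)} {x : EuclideanSpace ℝ (Fin d)}
  {η c : ℝ}

lemma minInnerRisk_le (hH : ∀ g ∈ H, c ≤ innerRisk ℓ g x η) {f} (hf : f ∈ H) :
    minInnerRisk ℓ H x η ≤ innerRisk ℓ f x η :=
  ciInf_le ⟨c, by rintro _ ⟨g, rfl⟩; exact hH g g.2⟩ (⟨f, hf⟩ : H)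

lemma le_minInnerRisk [Nonempty H] (h : ∀ g ∈ H, c ≤ innerRisk ℓ g x η) :
    c ≤ minInnerRisk ℓ H x η :=
  le_ciInf fun g => h g g.2

lemma exists_innerRisk_lt_minInnerRisk_add [Nonempty H] {δ : ℝ} (hδ : 0 < δ) :
    ∃ f ∈ H, innerRisk ℓ f x η < minInnerRisk ℓ H x η + δ := by
  obtain ⟨f, hf⟩ := exists_lt_of_ciInf_lt (lt_add_of_pos_right (minInnerRisk ℓ H x η) hδ)
  exact ⟨f, f.2, hf⟩

end MinInnerRisk

section Hrelu

variable {G : ℝ} {f : EuclideanSpace ℝ (Fin d) → ℝ}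

lemma relu_mem_Hrelu {w : EuclideanSpace ℝ (Fin d)} (hw : ‖w‖ = 1) {b : ℝ} (hb : |b| ≤ G) :
    (fun z => max ⟪w, z⟫ 0 + b) ∈ Hrelu d G :=
  ⟨w, b, hw, hb, rfl⟩

lemma apply_mem_Icc_of_mem_Hrelu (hf : f ∈ Hrelu d G) (x : EuclideanSpace ℝ (Fin d)) :
    f x ∈ Icc (-G) (‖x‖ + G) := by
  obtain ⟨w, b, hw, hb, rfl⟩ := hf
  have hwx : ⟪w, x⟫ ≤ ‖x‖ := by simpa [hw] using real_inner_le_norm w x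
  exact ⟨by linarith [le_max_right ⟪w, x⟫ 0, neg_abs_le b],
    by linarith [max_le hwx (norm_nonneg x), le_abs_self b]⟩

lemma lipschitzWith_of_mem_Hrelu (hf : f ∈ Hrelu d G) : LipschitzWith 1 f := by
  obtain ⟨w, b, hw, hb, rfl⟩ := hf
  have hn : ‖innerSL ℝ w‖₊ = 1 := by ext; simp [hw]
  have h := (innerSL ℝ w).lipschitz
  rw [hn] at h
  simpa using (h.max_const 0).add (LipschitzWith.const b)

lemma exists_unit_inner_eq_norm (hd : 0 < d) (x : EuclideanSpace ℝ (Fin d)) :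
    ∃ w : EuclideanSpace ℝ (Fin d), ‖w‖ = 1 ∧ ⟪w, x⟫ = ‖x‖ := by
  rcases eq_or_ne x 0 with rfl | hx
  · exact ⟨EuclideanSpace.single ⟨0, hd⟩ 1, by simp, by simp⟩
  · refine ⟨‖x‖⁻¹ • x, by simp [norm_smul, hx], ?_⟩
    rw [real_inner_smul_left, real_inner_self_eq_norm_mul_norm, inv_mul_cancel_left₀ (by simpa)]

lemma exists_mem_Hrelu_apply_eq_norm_add (hd : 0 < d) (hG : 0 ≤ G)
    (x : EuclideanSpace ℝ (Fin d)) : ∃ f ∈ Hrelu d G, f x = ‖x‖ + G := by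
  obtain ⟨w, hw, hwx⟩ := exists_unit_inner_eq_norm hd x
  exact ⟨_, relu_mem_Hrelu hw (abs_of_nonneg hG).le, by simp [hwx]⟩

lemma exists_mem_Hrelu_apply_eq_neg (hd : 0 < d) (hG : 0 ≤ G) (x : EuclideanSpace ℝ (Fin d)) :
    ∃ f ∈ Hrelu d G, f x = -G := by
  obtain ⟨w, hw, hwx⟩ := exists_unit_inner_eq_norm hd x
  refine ⟨_, relu_mem_Hrelu (w := -w) (by rw [norm_neg, hw]) (b := -G)
    (by simp [abs_of_nonneg hG]), by simp [inner_neg_left, hwx]⟩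

lemma exists_mem_Hrelu_zero_eq_neg (hd : 0 < d) {γ : ℝ} (hγ : 0 ≤ γ) (hγG : γ ≤ G) :
    ∃ f ∈ Hrelu d G, f 0 = -γ ∧ ∃ z ∈ closedBall 0 γ, f z = 0 := by
  obtain ⟨w, hw, -⟩ := exists_unit_inner_eq_norm hd 0
  refine ⟨_, relu_mem_Hrelu hw (b := -γ) (by simpa [abs_of_nonneg hγ]), by simp, γ • w,
    by simp [norm_smul, hw, abs_of_nonneg hγ], ?_⟩
  simp [real_inner_smul_right, hw, hγ]

lemma minInnerRisk_marginLoss_Hrelu_le (hd : 0 < d) (hG : 0 ≤ G) {φ : ℝ → ℝ}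
    (hanti : Antitone φ) {x : EuclideanSpace ℝ (Fin d)} {η : ℝ} (hη : η ∈ Icc (0 : ℝ) 1) :
    minInnerRisk (marginLoss φ) (Hrelu d G) x η
      ≤ min (marginRisk φ η (‖x‖ + G)) (marginRisk φ η (-G)) := by
  have hbdd : ∀ g ∈ Hrelu d G,
      η * φ (‖x‖ + G) + (1 - η) * φ G ≤ innerRisk (marginLoss φ) g x η := fun g hg => by
    have hgx := apply_mem_Icc_of_mem_Hrelu hg x
    rw [innerRisk_marginLoss, marginRisk]
    gcongr
    · exact hη.1
    · exact hanti hgx.2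
    · linarith [hη.2]
    · exact hanti (by linarith [hgx.1])
  obtain ⟨f₁, hf₁, hf₁x⟩ := exists_mem_Hrelu_apply_eq_norm_add hd hG x
  obtain ⟨f₂, hf₂, hf₂x⟩ := exists_mem_Hrelu_apply_eq_neg hd hG x
  refine le_min ?_ ?_
  · simpa [innerRisk_marginLoss, hf₁x] using minInnerRisk_le hbdd hf₁
  · simpa [innerRisk_marginLoss, hf₂x] using minInnerRisk_le hbdd hf₂

lemma minInnerRisk_advLoss_Hrelu (hd : 0 < d) {γ : ℝ} (hγ : 0 ≤ γ) (hγG : γ < G)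
    {x : EuclideanSpace ℝ (Fin d)} {η : ℝ} (hη : η ∈ Icc (0 : ℝ) 1) :
    minInnerRisk (advLoss γ) (Hrelu d G) x η = min η (1 - η) := by
  have hG : 0 ≤ G := by linarith
  obtain ⟨f₁, hf₁, hf₁x⟩ := exists_mem_Hrelu_apply_eq_norm_add hd hG x
  obtain ⟨f₂, hf₂, hf₂x⟩ := exists_mem_Hrelu_apply_eq_neg hd hG x
  have : Nonempty (Hrelu d G) := ⟨⟨f₁, hf₁⟩⟩
  have hbdd := fun g (_ : g ∈ Hrelu d G) => min_le_innerRisk_advLoss (f := g) (x := x) hγ hη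
  refine le_antisymm (le_min ?_ ?_) (le_minInnerRisk hbdd)
  · refine (minInnerRisk_le hbdd hf₂).trans_eq (innerRisk_advLoss_of_lt_neg
      (lipschitzWith_of_mem_Hrelu hf₂) (by linarith) hγ)
  · refine (minInnerRisk_le hbdd hf₁).trans_eq (innerRisk_advLoss_of_lt
      (lipschitzWith_of_mem_Hrelu hf₁) (by linarith [norm_nonneg x]) hγ)

end Hrelu

section Calibration

variable {G γ : ℝ} {φ : ℝ → ℝ}

/-- If `ψ γ = ψ G`, then at `x = 0`, `η = 1/2` the ReLU `z ↦ max ⟪w, z⟫ 0 - γ` is an exact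
minimiser of the surrogate risk that misclassifies both labels somewhere in the `γ`-ball. -/
lemma add_neg_lt_of_calibrated (hd : 0 < d) (hγ : 0 ≤ γ) (hγG : γ < G)
    (hq : QuasiconcaveOn ℝ univ fun t => φ t + φ (-t))
    (hcal : Calibrated (Hrelu d G) (marginLoss φ) (advLoss γ)) :
    φ G + φ (-G) < φ γ + φ (-γ) := by
  by_contra! hle
  obtain ⟨f, hf, hf0, z, hz, hfz⟩ := exists_mem_Hrelu_zero_eq_neg hd hγ hγG.le
  have : Nonempty (Hrelu d G) := ⟨⟨f, hf⟩⟩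
  have hη : (1 / 2 : ℝ) ∈ Icc (0 : ℝ) 1 := ⟨by norm_num, by norm_num⟩
  obtain ⟨δ, hδ, himp⟩ := hcal (1 / 2) one_half_pos (1 / 2) hη 0 (by simp)
  have hmin : innerRisk (marginLoss φ) f 0 (1 / 2)
      ≤ minInnerRisk (marginLoss φ) (Hrelu d G) 0 (1 / 2) := by
    refine le_minInnerRisk fun g hg => ?_
    have hg0 := apply_mem_Icc_of_mem_Hrelu hg 0
    rw [norm_zero, zero_add] at hg0
    have := add_neg_le_add_neg_of_abs_le hq (abs_le.2 hg0)
    simp only [innerRisk_marginLoss, marginRisk, hf0, neg_neg]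
    linarith
  have hadv := himp f hf (by linarith)
  rw [innerRisk_advLoss_eq_one ⟨0, mem_closedBall_self hγ, by linarith⟩ ⟨z, hz, hfz.ge⟩,
    minInnerRisk_advLoss_Hrelu hd hγ hγG hη] at hadv
  norm_num at hadv

/-- If `ψ (‖x‖ + G) < ψ G`, then for `η` slightly below `1/2` the value `‖x‖ + G` beats every
nonpositive value of `f x`, so near-minimisers of the surrogate risk have `f x ≥ 0`, the sign of
the less likely label. -/
lemma add_neg_eq_of_calibrated (hd : 0 < d) (hγ : 0 ≤ γ) (hγG : γ < G) (hanti : Antitone φ)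
    (hq : QuasiconcaveOn ℝ univ fun t => φ t + φ (-t))
    (hcal : Calibrated (Hrelu d G) (marginLoss φ) (advLoss γ))
    {x : EuclideanSpace ℝ (Fin d)} (hx : ‖x‖ ≤ 1) :
    φ G + φ (-G) = φ (‖x‖ + G) + φ (-(‖x‖ + G)) := by
  have hG : 0 ≤ G := by linarith
  refine le_antisymm ?_ (add_neg_le_add_neg_of_abs_le hq
    (by rw [abs_of_nonneg hG]; linarith [norm_nonneg x]))
  by_contra! hlt
  obtain ⟨η, hη0, hη, hgap⟩ := exists_marginRisk_lt_of_lt hlt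
  have hη' : η ∈ Icc (0 : ℝ) 1 := ⟨hη0, by linarith⟩
  obtain ⟨δ, hδ, himp⟩ := hcal (1 - 2 * η) (by linarith) η hη' x hx
  obtain ⟨f₀, hf₀, -⟩ := exists_mem_Hrelu_apply_eq_neg hd hG x
  have : Nonempty (Hrelu d G) := ⟨⟨f₀, hf₀⟩⟩
  obtain ⟨g, hg, hg_lt⟩ := exists_innerRisk_lt_minInnerRisk_add (H := Hrelu d G)
    (ℓ := marginLoss φ) (x := x) (η := η) (lt_min hδ (sub_pos.2 hgap))
  have hm := minInnerRisk_marginLoss_Hrelu_le hd hG hanti hη' (x := x)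
  rw [innerRisk_marginLoss] at hg_lt
  have hg0 : 0 ≤ g x := by
    by_contra! hneg
    have hgx := apply_mem_Icc_of_mem_Hrelu hg x
    have := marginRisk_neg_le_of_le_half hanti hη0 hη.le hgx.1
      (add_neg_le_add_neg_of_abs_le hq (abs_le.2 ⟨hgx.1, by linarith⟩))
    linarith [min_le_left (marginRisk φ η (‖x‖ + G)) (marginRisk φ η (-G)),
      min_le_right δ (marginRisk φ η (-G) - marginRisk φ η (‖x‖ + G))]
  have hadv := himp g hg (by
    rw [innerRisk_marginLoss]
    linarith [min_le_left δ (marginRisk φ η (-G) - marginRisk φ η (‖x‖ + G))])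
  rw [minInnerRisk_advLoss_Hrelu hd hγ hγG hη', min_eq_left (by linarith)] at hadv
  linarith [one_sub_le_innerRisk_advLoss hγ hη' hg0]

lemma calibrated_of_add_neg (hd : 0 < d) (hγ : 0 ≤ γ) (hγG : γ < G) (hanti : Antitone φ)
    (hq : QuasiconcaveOn ℝ univ fun t => φ t + φ (-t))
    (hflat : ∀ t ∈ Icc (0 : ℝ) 1, φ G + φ (-G) = φ (t + G) + φ (-(t + G)))
    (hψγ : φ G + φ (-G) < φ γ + φ (-γ)) :
    Calibrated (Hrelu d G) (marginLoss φ) (advLoss γ) := by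
  intro ε hε η hη x hx
  have hG : 0 ≤ G := by linarith
  obtain ⟨δ, hδ, hnear⟩ := marginRisk_near_min hanti hq hγ hG
    (le_add_of_nonneg_left (norm_nonneg x)) (hflat ‖x‖ ⟨norm_nonneg x, hx⟩).symm hψγ hη hε
  refine ⟨δ, hδ, fun f hf hf_lt => ?_⟩
  rw [minInnerRisk_advLoss_Hrelu hd hγ hγG hη]
  refine innerRisk_advLoss_lt_min_add (lipschitzWith_of_mem_Hrelu hf) hγ hε
    (hnear (f x) (apply_mem_Icc_of_mem_Hrelu hf x) ?_)
  rw [innerRisk_marginLoss] at hf_lt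
  exact hf_lt.trans_le (by gcongr; exact minInnerRisk_marginLoss_Hrelu_le hd hG hanti hη)

end Calibration

theorem stmt11_general (d : ℕ) (hd : 2 ≤ d) (γ : ℝ) (hγ0 : 0 < γ)
    (G : ℝ) (hG : 1 + γ < G)
    (φ : ℝ → ℝ) (hanti : Antitone φ)
    (hqce : QuasiconcaveOn ℝ Set.univ (fun t => φ t + φ (-t))) :
    Calibrated (Hrelu d G) (marginLoss φ) (advLoss γ) ↔
      ∀ t ∈ Set.Icc (0:ℝ) 1,
        φ G + φ (-G) = φ (t + G) + φ (-t - G) ∧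
        φ G + φ (-G) < φ γ + φ (-γ) := by
  have hd0 : 0 < d := by omega
  have hγG : γ < G := by linarith
  simp_rw [← neg_add']
  refine ⟨fun hcal t ht => ⟨?_, add_neg_lt_of_calibrated hd0 hγ0.le hγG hqce hcal⟩,
    fun h => calibrated_of_add_neg hd0 hγ0.le hγG hanti hqce (fun t ht => (h t ht).1)
      (h 0 ⟨le_rfl, zero_le_one⟩).2⟩
  obtain ⟨w, hw, -⟩ := exists_unit_inner_eq_norm hd0 0
  have hx : ‖t • w‖ = t := by simp [norm_smul, hw, abs_of_nonneg ht.1]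
  simpa [hx] using add_neg_eq_of_calibrated hd0 hγ0.le hγG hanti hqce hcal (hx.trans_le ht.2)

theorem stmt11 (d : ℕ) (hd : 2 ≤ d) (γ : ℝ) (hγ0 : 0 < γ) (hγ1 : γ < 1)
    (G : ℝ) (hG : 1 + γ < G)
    (φ : ℝ → ℝ) (hφ0 : ∀ t, 0 ≤ φ t) (hbdd : ∃ M, ∀ t, φ t ≤ M)
    (hcont : Continuous φ) (hanti : Antitone φ)
    (hqce : QuasiconcaveOn ℝ Set.univ (fun t => φ t + φ (-t)))
    (hstrict : φ G < φ (-G)) :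
    Calibrated (Hrelu d G) (marginLoss φ) (advLoss γ) ↔
      ∀ t ∈ Set.Icc (0:ℝ) 1,
        φ G + φ (-G) = φ (t + G) + φ (-t - G) ∧
        φ G + φ (-G) < φ γ + φ (-γ) :=
  stmt11_general d hd γ hγ0 G hG φ hanti hqce
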